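/- Let R be a field and let G and A be groups. Let a₁, …, a_t be distinct elements of A, let α₁, …, α_t be nonzero elements of R, and let u₁, …, u_t ∈ R[G]. In R[G × A], let u = Σ_{i=1}^{t} α_i·ū_i·(1, a_i), where ū_i is the image of u_i under the embedding g ↦ (g, 1) and (1, a_i) denotes the corresponding group element. Then supp(u) = supp(u₁) + supp(u₂) + … + supp(u_t). -/

import Mathlib

/-!
The `i`-th summand is `α i • u i` transported to the coset `G × {a i}` along the injection
`g ↦ (g, a i)`. Transport along an injection and scaling by a nonzero scalar preserve the weight,
and summands living on distinct cosets have disjoint supports, so the weights add up.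
-/

noncomputable section

open MonoidAlgebra

/-- The weight (support size) of an element of a group algebra. -/
def wt {R : Type*} [Semiring R] {G : Type*} (x : MonoidAlgebra R G) : ℕ :=
  (x.coeff : G →₀ R).support.card

namespace MonoidAlgebra

variable {R M N : Type*} [Semiring R]

lemma mul_single_one_eq_mapDomain [Mul M] (x : R[M]) (m : M) :
    x * single m 1 = mapDomain (· * m) x := by
  induction x using induction_linear with
  | zero => simp
  | add x y hx hy => rw [add_mul, hx, hy, mapDomain_add]
  | single g r => rw [single_mul_single, mul_one, mapDomain_single]

lemma mapDomain_comp {O : Type*} (f : M → N) (g : N → O) (x : R[M]) :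
    mapDomain (g ∘ f) x = mapDomain g (mapDomain f x) := by
  ext; simp [Finsupp.mapDomain_comp]

lemma mapDomainRingHom_inl_mul_of {G A : Type*} [Monoid G] [Monoid A]
    (x : R[G]) (b : A) :
    mapDomainRingHom R (MonoidHom.inl G A) x * of R (G × A) (1, b) =
      mapDomain (fun g ↦ (g, b)) x := by
  rw [of_apply, mul_single_one_eq_mapDomain, mapDomainRingHom_apply, ← mapDomain_comp]
  congr 1
  funext g
  simp

lemma disjoint_support_coeff_mapDomain_prodMk (x y : R[M]) {b b' : N} (hb : b ≠ b') :
    Disjoint (mapDomain (fun m ↦ (m, b)) x).coeff.support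
      (mapDomain (fun m ↦ (m, b')) y).coeff.support := by
  classical
  refine Finset.disjoint_left.mpr fun p hpx hpy ↦ hb ?_
  obtain ⟨m, -, rfl⟩ := Finset.mem_image.mp (Finsupp.mapDomain_support hpx)
  obtain ⟨m', -, hm'⟩ := Finset.mem_image.mp (Finsupp.mapDomain_support hpy)
  exact (Prod.ext_iff.mp hm').2.symm

end MonoidAlgebra

section Weight

variable {R M N : Type*}

lemma wt_mapDomain_of_injective [Semiring R] {f : M → N} (hf : Function.Injective f) (x : R[M]) :
    wt (mapDomain f x) = wt x := by
  classical
  rw [wt, wt, coeff_mapDomain, Finsupp.mapDomain_support_of_injective hf,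
    Finset.card_image_of_injective _ hf]

lemma wt_smul [Semiring R] [IsDomain R] {c : R} (hc : c ≠ 0) (x : R[M]) : wt (c • x) = wt x := by
  rw [wt, wt, coeff_smul, Finsupp.support_smul_eq hc]

lemma wt_sum_of_pairwise_disjoint [Semiring R] {ι : Type*} (s : Finset ι) (x : ι → R[M])
    (hx : Pairwise fun i j ↦ Disjoint (x i).coeff.support (x j).coeff.support) :
    wt (∑ i ∈ s, x i) = ∑ i ∈ s, wt (x i) := by
  classical
  rw [wt, coeff_sum, Finsupp.support_sum_eq_biUnion s hx,
    Finset.card_biUnion fun i _ j _ hij ↦ hx hij]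
  rfl

end Weight

theorem support_card_of_sum {R : Type*} [Field R] {G A : Type*} [Group G] [Group A]
    (t : ℕ) (a : Fin t → A) (ha : Function.Injective a)
    (α : Fin t → R) (hα : ∀ i, α i ≠ 0)
    (u : Fin t → MonoidAlgebra R G) :
    wt (∑ i : Fin t,
        α i • (MonoidAlgebra.mapDomainRingHom R (MonoidHom.inl G A) (u i) *
          MonoidAlgebra.of R (G × A) (1, a i))) =
      ∑ i : Fin t, wt (u i) := by
  have hterm (i : Fin t) : α i • (MonoidAlgebra.mapDomainRingHom R (MonoidHom.inl G A) (u i) *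
      MonoidAlgebra.of R (G × A) (1, a i)) = mapDomain (fun g ↦ (g, a i)) (α i • u i) := by
    rw [mapDomainRingHom_inl_mul_of, mapDomain_smul]
  simp_rw [hterm]
  rw [wt_sum_of_pairwise_disjoint]
  · refine Finset.sum_congr rfl fun i _ ↦ ?_
    rw [wt_mapDomain_of_injective (Prod.mk_left_injective (a i)), wt_smul (hα i)]
  · exact fun i j hij ↦ disjoint_support_coeff_mapDomain_prodMk _ _ (ha.ne hij)

end
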